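/- arXiv:1907.04775 — 3 statements merged into one kernel-verified Lean document; each statement's English description precedes it below -/
import Mathlib

section
/- The inner loop of the nested column-and-constraint generation algorithm converges in finitely many iterations: since {0,1}^m is finite, if at some iteration the newly generated integer vector z^(ℓ+1) coincides with a previously generated z^(k), then UB^i = LB^i and the loop terminates; consequently the number of inner-loop iterations is at most 2^m + 1. -/
open Matrix

/-- Finite convergence of the inner loop. With scenarios `u k ∈ U` and binary
vectors `z k` generated by the inner loop (each `z k` optimal for `u k`, and each `u (ℓ+1)`
a maximizer of `u' ↦ min_{k≤ℓ} v(u', z k)` over `U`): if the newly generated binary vector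
`z (ℓ+1)` coincides with some previously generated `z k` (`k ≤ ℓ`), then the inner-loop upper
bound `UB^i_ℓ = min_{k≤ℓ} v(u (ℓ+1), z k)` equals the inner-loop lower bound
`LB^i_{ℓ+1} = max_{k≤ℓ+1} v(u k, z k)`; consequently, since `{0,1}^m` is finite, such
termination happens at some iteration `ℓ ≤ 2^m`, i.e. within at most `2^m + 1` iterations. -/
theorem inner_loop_finite_convergence {nx ny nu m q r : ℕ}
    (A : Matrix (Fin q) (Fin nx) ℝ) (B : Matrix (Fin q) (Fin ny) ℝ)
    (D : Matrix (Fin q) (Fin nu) ℝ) (a : Fin q → ℝ)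
    (F : Matrix (Fin r) (Fin nx) ℝ) (G : Matrix (Fin r) (Fin ny) ℝ)
    (H : Matrix (Fin r) (Fin nu) ℝ) (Iz : Matrix (Fin r) (Fin m) ℝ)
    (d : Fin r → ℝ) (b : Fin ny → ℝ)
    (x : Fin nx → ℝ)
    (U : Finset (Fin nu → ℝ)) (hU : U.Nonempty)
    (v : (Fin nu → ℝ) → (Fin m → Bool) → ℝ)
    (hv : ∀ u' z, IsLeast {cost | ∃ y : Fin ny → ℝ,
        A.mulVec x + B.mulVec y + D.mulVec u' = a ∧
        d ≤ F.mulVec x + G.mulVec y + H.mulVec u'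
            + Iz.mulVec (fun i => if z i then 1 else 0) ∧
        cost = b ⬝ᵥ y} (v u' z))
    (u : ℕ → (Fin nu → ℝ)) (z : ℕ → (Fin m → Bool))
    (hu : ∀ k, 1 ≤ k → u k ∈ U)
    -- each `z k` is an optimal binary recourse solution for scenario `u k`
    (hzopt : ∀ k, 1 ≤ k → ∀ f : Fin m → Bool, v (u k) (z k) ≤ v (u k) f)
    -- each `u (ℓ+1)` is a maximizer over `U` of `u' ↦ min_{1≤k≤ℓ} v(u', z k)`
    (humax : ∀ ℓ, ∀ hℓ : 1 ≤ ℓ, ∀ u' ∈ U,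
      (Finset.Icc 1 ℓ).inf' (Finset.nonempty_Icc.mpr hℓ) (fun k => v u' (z k))
        ≤ (Finset.Icc 1 ℓ).inf' (Finset.nonempty_Icc.mpr hℓ) (fun k => v (u (ℓ + 1)) (z k))) :
    (∀ ℓ, ∀ hℓ : 1 ≤ ℓ, (∃ k, 1 ≤ k ∧ k ≤ ℓ ∧ z (ℓ + 1) = z k) →
      (Finset.Icc 1 ℓ).inf' (Finset.nonempty_Icc.mpr hℓ) (fun k => v (u (ℓ + 1)) (z k))
        = (Finset.Icc 1 (ℓ + 1)).sup' (Finset.nonempty_Icc.mpr (by omega))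
            (fun k => v (u k) (z k)))
    ∧ (∃ ℓ, ∃ hℓ : 1 ≤ ℓ, ℓ ≤ 2 ^ m ∧
      (Finset.Icc 1 ℓ).inf' (Finset.nonempty_Icc.mpr hℓ) (fun k => v (u (ℓ + 1)) (z k))
        = (Finset.Icc 1 (ℓ + 1)).sup' (Finset.nonempty_Icc.mpr (by omega))
            (fun k => v (u k) (z k))) := by
  have key : ∀ ℓ, ∀ hℓ : 1 ≤ ℓ, (∃ k, 1 ≤ k ∧ k ≤ ℓ ∧ z (ℓ + 1) = z k) →
      (Finset.Icc 1 ℓ).inf' (Finset.nonempty_Icc.mpr hℓ) (fun k => v (u (ℓ + 1)) (z k))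
        = (Finset.Icc 1 (ℓ + 1)).sup' (Finset.nonempty_Icc.mpr (by omega))
            (fun k => v (u k) (z k)) := by
    rintro ℓ hℓ ⟨k0, hk1, hk2, hzeq⟩
    apply le_antisymm
    · calc (Finset.Icc 1 ℓ).inf' (Finset.nonempty_Icc.mpr hℓ)
            (fun k => v (u (ℓ + 1)) (z k))
          ≤ v (u (ℓ+1)) (z k0) := Finset.inf'_le _ (Finset.mem_Icc.mpr ⟨hk1, hk2⟩)
        _ = v (u (ℓ+1)) (z (ℓ+1)) := by rw [hzeq]
        _ ≤ _ := Finset.le_sup' (f := fun k => v (u k) (z k)) (Finset.mem_Icc.mpr ⟨by omega, le_refl _⟩)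
    · apply Finset.sup'_le
      intro k hk
      simp only [Finset.mem_Icc] at hk
      have h1 : v (u k) (z k) ≤ (Finset.Icc 1 ℓ).inf' (Finset.nonempty_Icc.mpr hℓ)
          (fun j => v (u k) (z j)) := by
        apply Finset.le_inf'
        intro j _
        exact hzopt k hk.1 (z j)
      exact h1.trans (humax ℓ hℓ (u k) (hu k hk.1))
  refine ⟨key, ?_⟩
  have hcard : (Finset.univ : Finset (Fin m → Bool)).card < (Finset.Icc 1 (2^m + 1)).card := by
    simp [Nat.card_Icc]
  obtain ⟨k, hk, l, hl, hne, heq⟩ :=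
    Finset.exists_ne_map_eq_of_card_lt_of_maps_to hcard
      (fun a _ => (Finset.mem_univ (z a)))
  simp only [Finset.mem_Icc] at hk hl
  rcases hne.lt_or_gt with h | h
  · refine ⟨l - 1, by omega, by omega, key (l - 1) (by omega) ⟨k, hk.1, by omega, ?_⟩⟩
    have : l - 1 + 1 = l := by omega
    rw [this]; exact heq.symm
  · refine ⟨k - 1, by omega, by omega, key (k - 1) (by omega) ⟨l, hl.1, by omega, ?_⟩⟩
    have : k - 1 + 1 = k := by omega
    rw [this]; exact heq
end

section
/- The outer loop of the nested column-and-constraint generation algorithm terminates in finitely many iterations when both the first-stage feasible set and the uncertainty set are finite: if the scenario u^(j+1) generated at outer iteration j has already appeared among u^(1),…,u^(j), then the outer-loop lower bound equals the outer-loop upper bound. -/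
/-- Finite termination of the outer loop. With `X`, `U` finite, recourse value
`Q x u = min_{z∈{0,1}^m} v x u z`, master minimizers `x j` of
`x' ↦ e x' + max_{i≤j} Q x' (u i)`, and subproblem maximizers `u (j+1)` of `Q (x j) ·` over
`U`: if the scenario generated at outer iteration `j` has already appeared among
`u 1, …, u j`, then the outer-loop lower bound
`LB^o_j = min_{x'∈X} (e x' + max_{i≤j} Q x' (u i))` equals the outer-loop upper bound
`UB^o_j = min_{i≤j} (e (x i) + max_{u'∈U} Q (x i) u')`. -/
theorem outer_loop_finite_termination {α β : Type*} {m : ℕ}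
    (X : Finset α) (hX : X.Nonempty) (U : Finset β) (hU : U.Nonempty)
    (e : α → ℝ) (v : α → β → (Fin m → Bool) → ℝ) (Q : α → β → ℝ)
    (hQ : ∀ x u, Q x u =
      Finset.univ.inf' Finset.univ_nonempty (fun z : Fin m → Bool => v x u z))
    (u : ℕ → β) (x : ℕ → α)
    (hu : ∀ i, 1 ≤ i → u i ∈ U)
    (hxmem : ∀ j, 1 ≤ j → x j ∈ X)
    -- `x j` minimizes the master problem with scenarios `u 1, …, u j`
    (hxopt : ∀ j, ∀ hj : 1 ≤ j, ∀ x' ∈ X,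
      e (x j) + (Finset.Icc 1 j).sup' (Finset.nonempty_Icc.mpr hj) (fun i => Q (x j) (u i))
        ≤ e x' + (Finset.Icc 1 j).sup' (Finset.nonempty_Icc.mpr hj) (fun i => Q x' (u i)))
    -- `u (j+1)` maximizes `Q (x j) ·` over `U`
    (husub : ∀ j, 1 ≤ j → ∀ u' ∈ U, Q (x j) u' ≤ Q (x j) (u (j + 1))) :
    ∀ j, ∀ hj : 1 ≤ j, (∃ i, 1 ≤ i ∧ i ≤ j ∧ u (j + 1) = u i) →
      X.inf' hX (fun x' =>
          e x' + (Finset.Icc 1 j).sup' (Finset.nonempty_Icc.mpr hj) (fun i => Q x' (u i)))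
        = (Finset.Icc 1 j).inf' (Finset.nonempty_Icc.mpr hj)
            (fun i => e (x i) + U.sup' hU (fun u' => Q (x i) u')) := by
  intro j hj ⟨i0, hi01, hi0j, hrep⟩
  have hne : (Finset.Icc 1 j).Nonempty := Finset.nonempty_Icc.mpr hj
  apply le_antisymm
  · -- LB ≤ UB
    apply Finset.le_inf'
    intro i hi
    obtain ⟨hi1, hij⟩ := Finset.mem_Icc.mp hi
    refine le_trans (Finset.inf'_le _ (hxmem i hi1)) ?_
    gcongr
    apply Finset.sup'_le
    intro k hk
    exact Finset.le_sup' _ (hu k (Finset.mem_Icc.mp hk).1)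
  · -- UB ≤ LB
    refine le_trans (Finset.inf'_le _ (Finset.mem_Icc.mpr ⟨hj, le_refl j⟩)) ?_
    have h1 : U.sup' hU (fun u' => Q (x j) u') ≤
        (Finset.Icc 1 j).sup' hne (fun i => Q (x j) (u i)) := by
      apply Finset.sup'_le
      intro u' hu'
      calc Q (x j) u' ≤ Q (x j) (u (j+1)) := husub j hj u' hu'
        _ = Q (x j) (u i0) := by rw [hrep]
        _ ≤ _ := Finset.le_sup' (fun i => Q (x j) (u i)) (Finset.mem_Icc.mpr ⟨hi01, hi0j⟩)
    have h2 : e (x j) + U.sup' hU (fun u' => Q (x j) u') ≤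
        e (x j) + (Finset.Icc 1 j).sup' hne (fun i => Q (x j) (u i)) := by linarith
    refine le_trans h2 (Finset.le_inf' _ _ ?_)
    intro x' hx'
    exact hxopt j hj x' hx'
end

section
/- At every outer-loop iteration of the column-and-constraint generation algorithm, LB^o ≤ OPT ≤ UB^o, where OPT is the optimal value of the two-stage robust problem; hence when UB^o − LB^o = 0 the incumbent first-stage decision is optimal. -/
/-- At every outer-loop iteration, `LB^o_j ≤ OPT ≤ UB^o_j`, where
`OPT = min_{x∈X}(e x + max_{u∈U} Q x u)` is the optimal value of the two-stage robust
problem, `LB^o_j = min_{x∈X}(e x + max_{i≤j} Q x (u i))`, and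
`UB^o_j = min_{i≤j}(e (x i) + max_{u∈U} Q (x i) u)` with `x i` the master minimizers;
hence when `UB^o_j − LB^o_j = 0` the incumbent first-stage decision is optimal. -/
theorem outer_loop_bounds_valid {α β : Type*}
    (X : Finset α) (hX : X.Nonempty) (U : Finset β) (hU : U.Nonempty)
    (e : α → ℝ) (Q : α → β → ℝ)
    (u : ℕ → β) (x : ℕ → α)
    (hu : ∀ i, 1 ≤ i → u i ∈ U)
    (hxmem : ∀ i, 1 ≤ i → x i ∈ X)
    -- `x i` minimizes the master problem with scenarios `u 1, …, u i`
    (hxopt : ∀ i, ∀ hi : 1 ≤ i, ∀ x' ∈ X,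
      e (x i) + (Finset.Icc 1 i).sup' (Finset.nonempty_Icc.mpr hi) (fun k => Q (x i) (u k))
        ≤ e x' + (Finset.Icc 1 i).sup' (Finset.nonempty_Icc.mpr hi) (fun k => Q x' (u k)))
    (j : ℕ) (hj : 1 ≤ j) :
    X.inf' hX (fun x' =>
        e x' + (Finset.Icc 1 j).sup' (Finset.nonempty_Icc.mpr hj) (fun i => Q x' (u i)))
      ≤ X.inf' hX (fun x' => e x' + U.sup' hU (fun u' => Q x' u'))
    ∧ X.inf' hX (fun x' => e x' + U.sup' hU (fun u' => Q x' u'))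
      ≤ (Finset.Icc 1 j).inf' (Finset.nonempty_Icc.mpr hj)
          (fun i => e (x i) + U.sup' hU (fun u' => Q (x i) u'))
    ∧ ((Finset.Icc 1 j).inf' (Finset.nonempty_Icc.mpr hj)
          (fun i => e (x i) + U.sup' hU (fun u' => Q (x i) u'))
        - X.inf' hX (fun x' =>
            e x' + (Finset.Icc 1 j).sup' (Finset.nonempty_Icc.mpr hj) (fun i => Q x' (u i)))
        = 0 →
      ∃ i, 1 ≤ i ∧ i ≤ j ∧
        e (x i) + U.sup' hU (fun u' => Q (x i) u')
          = X.inf' hX (fun x' => e x' + U.sup' hU (fun u' => Q x' u'))) := by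
  have hLB : X.inf' hX (fun x' =>
        e x' + (Finset.Icc 1 j).sup' (Finset.nonempty_Icc.mpr hj) (fun i => Q x' (u i)))
      ≤ X.inf' hX (fun x' => e x' + U.sup' hU (fun u' => Q x' u')) := by
    apply Finset.le_inf'
    intro x' hx'
    refine le_trans (Finset.inf'_le _ hx') ?_
    gcongr
    apply Finset.sup'_le
    intro k hk
    exact Finset.le_sup' _ (hu k (Finset.mem_Icc.mp hk).1)
  have hUB : X.inf' hX (fun x' => e x' + U.sup' hU (fun u' => Q x' u'))
      ≤ (Finset.Icc 1 j).inf' (Finset.nonempty_Icc.mpr hj)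
          (fun i => e (x i) + U.sup' hU (fun u' => Q (x i) u')) := by
    apply Finset.le_inf'
    intro i hi
    exact Finset.inf'_le _ (hxmem i (Finset.mem_Icc.mp hi).1)
  refine ⟨hLB, hUB, fun hgap => ?_⟩
  obtain ⟨i, hi, hieq⟩ := Finset.exists_mem_eq_inf' (Finset.nonempty_Icc.mpr hj)
    (fun i => e (x i) + U.sup' hU (fun u' => Q (x i) u'))
  obtain ⟨hi1, hij⟩ := Finset.mem_Icc.mp hi
  refine ⟨i, hi1, hij, ?_⟩
  have h1 : (Finset.Icc 1 j).inf' (Finset.nonempty_Icc.mpr hj)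
          (fun i => e (x i) + U.sup' hU (fun u' => Q (x i) u'))
        = X.inf' hX (fun x' =>
            e x' + (Finset.Icc 1 j).sup' (Finset.nonempty_Icc.mpr hj) (fun i => Q x' (u i))) := by
    linarith [sub_eq_zero.mp hgap]
  rw [← hieq]
  linarith [h1 ▸ hUB, hLB.trans hUB, h1]
end
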